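/- arXiv:1702.07866 — 3 statements merged into one kernel-verified Lean document; each statement's English description precedes it below -/
import Mathlib

section
/- For an odd integer p ≥ 5 and colors i, j in C_p = {0, 2, 4, ..., p-3}, the dimension of the genus-one conformal block space W_{1,p,(j,i)} equals (p - 1 - max(i,j)) * (min(i,j) + 1) / 2. -/
/-!
By symmetry assume `i ≤ j`. For even colours `a, b` the two admissibility conditions reduce
to `|a - b| ≤ i` and `j ≤ a + b ≤ 2p - 4 - j`, the bound `a, b ≤ p - 3` being automatic by
parity.
Fibering over `v = (a - b + i) / 2 ∈ [0, i]`, the fiber is parametrised by `a`, which runs over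
the even numbers of an interval of length `p - 1 - j`, an even number. Hence each of the `i + 1`
fibers has `(p - 1 - j) / 2` elements.
-/

/-- The color set `C_p = {0, 2, 4, ..., p-3}` for odd `p ≥ 5`. -/
def Cp (p : ℕ) : Finset ℕ := (Finset.range (p - 2)).filter (fun n => Even n)

/-- A triple of colors is `p`-admissible: triangle inequalities and sum bounded by `2(p-2)`. -/
def Admissible (p x y z : ℕ) : Prop :=
  x ≤ y + z ∧ y ≤ x + z ∧ z ≤ x + y ∧ x + y + z ≤ 2 * (p - 2)

instance (p x y z : ℕ) : Decidable (Admissible p x y z) := by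
  unfold Admissible; infer_instance

open Finset

theorem card_filter_even_Ico_add_two_mul (m k : ℕ) : #{x ∈ Ico m (m + 2 * k) | Even x} = k := by
  induction k with
  | zero => simp
  | succ k ih =>
    have hsplit : Ico m (m + 2 * (k + 1)) = Ico m (m + 2 * k) ∪ {m + 2 * k, m + 2 * k + 1} := by
      ext x
      simp only [mem_union, mem_Ico, mem_insert, mem_singleton]
      omega
    have hdisj : Disjoint (Ico m (m + 2 * k)) {m + 2 * k, m + 2 * k + 1} := by
      simp only [disjoint_left, mem_Ico, mem_insert, mem_singleton]
      omega
    rw [hsplit, filter_union, card_union_of_disjoint (disjoint_filter_filter hdisj), ih]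
    rcases Nat.even_or_odd (m + 2 * k) with h | h
    · rw [filter_insert, if_pos h, filter_singleton, if_neg (by simpa [Nat.even_add_one])]
      simp
    · rw [filter_insert, if_neg (Nat.not_even_iff_odd.mpr h), filter_singleton,
        if_pos (Odd.add_one h)]
      simp

def admissiblePairs (p i j : ℕ) : Finset (ℕ × ℕ) :=
  (Cp p ×ˢ Cp p).filter (fun ab => Admissible p ab.1 ab.2 i ∧ Admissible p ab.1 ab.2 j)

@[simp]
theorem mem_Cp {p n : ℕ} : n ∈ Cp p ↔ n < p - 2 ∧ Even n := by
  simp [Cp]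

@[simp]
theorem mem_admissiblePairs {p i j : ℕ} {ab : ℕ × ℕ} :
    ab ∈ admissiblePairs p i j ↔
      (ab.1 ∈ Cp p ∧ ab.2 ∈ Cp p) ∧
        Admissible p ab.1 ab.2 i ∧ Admissible p ab.1 ab.2 j := by
  simp [admissiblePairs]

theorem admissiblePairs_comm (p i j : ℕ) : admissiblePairs p i j = admissiblePairs p j i :=
  filter_congr fun _ _ => and_comm

section

variable {p i j : ℕ} (hp : Odd p) (hi : i ∈ Cp p) (hj : j ∈ Cp p) (hij : i ≤ j)
include hp hi hj hij

theorem card_admissiblePairs_fiber {v : ℕ} (hv : v ≤ i) :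
    #{ab ∈ admissiblePairs p i j | (ab.1 + i - ab.2) / 2 = v} = (p - 1 - j) / 2 := by
  rw [← card_filter_even_Ico_add_two_mul ((j - i) / 2 + v) ((p - 1 - j) / 2)]
  simp only [mem_Cp, Nat.even_iff] at hi hj
  have hp' := Nat.odd_iff.mp hp
  apply card_nbij' Prod.fst (fun a => (a, a + i - 2 * v))
  · rintro ⟨a, b⟩ hab
    simp only [coe_filter, mem_admissiblePairs, mem_Cp, Admissible, Nat.even_iff,
      Set.mem_ofPred_eq, mem_Ico] at hab ⊢
    omega
  · intro a ha
    simp only [coe_filter, mem_admissiblePairs, mem_Cp, Admissible, Nat.even_iff,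
      Set.mem_ofPred_eq, mem_Ico] at ha ⊢
    omega
  · rintro ⟨a, b⟩ hab
    simp only [coe_filter, mem_admissiblePairs, mem_Cp, Admissible, Nat.even_iff,
      Set.mem_ofPred_eq] at hab
    simp only [Prod.mk.injEq, true_and]
    omega
  · intro a _
    rfl

theorem card_admissiblePairs_of_le : #(admissiblePairs p i j) = (p - 1 - j) * (i + 1) / 2 := by
  have hmaps : ∀ ab ∈ admissiblePairs p i j, (ab.1 + i - ab.2) / 2 ∈ range (i + 1) := by
    rintro ⟨a, b⟩ hab
    simp only [mem_admissiblePairs, Admissible, mem_range] at hab ⊢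
    omega
  have hfiber : ∀ v ∈ range (i + 1),
      #{ab ∈ admissiblePairs p i j | (ab.1 + i - ab.2) / 2 = v} = (p - 1 - j) / 2 :=
    fun v hv => card_admissiblePairs_fiber hp hi hj hij (Nat.lt_succ_iff.mp (mem_range.mp hv))
  rw [card_eq_sum_card_fiberwise hmaps, sum_congr rfl hfiber, sum_const, card_range, smul_eq_mul]
  obtain ⟨k, hk⟩ : ∃ k, p - 1 - j = 2 * k := by
    simp only [mem_Cp, Nat.even_iff] at hj
    exact ⟨(p - 1 - j) / 2, by have := Nat.odd_iff.mp hp; omega⟩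
  rw [hk, mul_assoc, Nat.mul_div_cancel_left _ two_pos, Nat.mul_div_cancel_left _ two_pos, mul_comm]

end

theorem genus_one_dimension_general (p : ℕ) (hp : Odd p)
    (i j : ℕ) (hi : i ∈ Cp p) (hj : j ∈ Cp p) :
    (((Cp p) ×ˢ (Cp p)).filter
        (fun ab => Admissible p ab.1 ab.2 i ∧ Admissible p ab.1 ab.2 j)).card
      = (p - 1 - max i j) * (min i j + 1) / 2 := by
  change #(admissiblePairs p i j) = _
  rcases le_total i j with h | h
  · rw [max_eq_right h, min_eq_left h, card_admissiblePairs_of_le hp hi hj h]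
  · rw [max_eq_left h, min_eq_right h, admissiblePairs_comm,
      card_admissiblePairs_of_le hp hj hi h]

/-- The dimension of the genus-one conformal block space `W_{1,p,(j,i)}`, counted as the
number of `p`-admissible colorings `(a, b)` of the two interior edges of the standard
genus-1 trivalent graph with two boundary legs colored `i` and `j`, equals
`(p - 1 - max i j) * (min i j + 1) / 2`. -/
theorem genus_one_dimension (p : ℕ) (hp : Odd p) (hp5 : 5 ≤ p)
    (i j : ℕ) (hi : i ∈ Cp p) (hj : j ∈ Cp p) :
    (((Cp p) ×ˢ (Cp p)).filter
        (fun ab => Admissible p ab.1 ab.2 i ∧ Admissible p ab.1 ab.2 j)).card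
      = (p - 1 - max i j) * (min i j + 1) / 2 :=
  genus_one_dimension_general p hp i j hi hj
end

section
/- For an odd integer p ≥ 5, the genus-2 Verlinde dimensions satisfy dim W_{2,p,(k)} ≥ dim W_{2,p,(0)} for all k ∈ C_p, with equality only when k = 0 or k = p-3. -/
/-- The genus-2 Verlinde dimension formula
`dim W_{2,p,(k)} = (1/24)((k+1)p³ - (3/2)k(k+2)p² + (1/2)(k³+3k²-4)p)`. -/
noncomputable def dimW2 (p k : ℕ) : ℚ :=
  (1 / 24) * (((k : ℚ) + 1) * (p : ℚ) ^ 3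
    - (3 / 2) * (k : ℚ) * ((k : ℚ) + 2) * (p : ℚ) ^ 2
    + (1 / 2) * ((k : ℚ) ^ 3 + 3 * (k : ℚ) ^ 2 - 4) * (p : ℚ))

theorem dimW2_sub_dimW2_zero (p k : ℕ) :
    dimW2 p k - dimW2 p 0 = p * k * (2 * p - k) * (p - 3 - k) / 48 := by
  simp only [dimW2]
  push_cast
  ring

theorem add_three_le_of_mem_Cp {p k : ℕ} (hk : k ∈ Cp p) : k + 3 ≤ p := by
  have hk := (Finset.mem_filter.1 hk).1
  rw [Finset.mem_range] at hk
  omega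

section

variable {p k : ℕ}

theorem dimW2_zero_le (h : k + 3 ≤ p) : dimW2 p 0 ≤ dimW2 p k := by
  have h' : (k : ℚ) + 3 ≤ p := by exact_mod_cast h
  have hk : (0 : ℚ) ≤ 2 * p - k := by linarith
  have hpk : (0 : ℚ) ≤ p - 3 - k := by linarith
  rw [← sub_nonneg, dimW2_sub_dimW2_zero]
  positivity

theorem dimW2_eq_dimW2_zero_iff (h : k + 3 ≤ p) :
    dimW2 p k = dimW2 p 0 ↔ k = 0 ∨ k = p - 3 := by
  have h' : (k : ℚ) + 3 ≤ p := by exact_mod_cast h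
  have hp : (p : ℚ) ≠ 0 := Nat.cast_ne_zero.2 (by omega)
  have hk : (2 * p - k : ℚ) ≠ 0 := by linarith
  have hpk : k = p - 3 ↔ (p : ℚ) - 3 - k = 0 := by
    have hcast : ((p - 3 : ℕ) : ℚ) = p - 3 := by rw [Nat.cast_sub (by omega), Nat.cast_ofNat]
    rw [sub_eq_zero, eq_comm, ← hcast, Nat.cast_inj]
  rw [← sub_eq_zero, dimW2_sub_dimW2_zero, hpk]
  simp [hp, hk]

end

theorem genus_two_minimal_general (p : ℕ) (k : ℕ) (hk : k ∈ Cp p) :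
    dimW2 p 0 ≤ dimW2 p k ∧ (dimW2 p k = dimW2 p 0 ↔ k = 0 ∨ k = p - 3) := by
  have h := add_three_le_of_mem_Cp hk
  exact ⟨dimW2_zero_le h, dimW2_eq_dimW2_zero_iff h⟩

/-- For odd `p ≥ 5` and `k ∈ C_p`, `dim W_{2,p,(k)} ≥ dim W_{2,p,(0)}`,
with equality exactly when `k = 0` or `k = p - 3`. -/
theorem genus_two_minimal (p : ℕ) (hp : Odd p) (hp5 : 5 ≤ p) (k : ℕ) (hk : k ∈ Cp p) :
    dimW2 p 0 ≤ dimW2 p k ∧ (dimW2 p k = dimW2 p 0 ↔ k = 0 ∨ k = p - 3) :=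
  genus_two_minimal_general p k hk
end

section
/- If a group G has surjective homomorphisms f_i : G → H_i onto pairwise non-equivalent finite non-abelian simple groups H_1, ..., H_k (meaning for i ≠ j there is no isomorphism α : H_i → H_j with α ∘ f_i = f_j), then the product map (f_1, ..., f_k) : G → H_1 × ⋯ × H_k is surjective. -/
/-!
Induct on `k`, splitting off the factor `H 0`. By induction `G` maps onto `∏ H (i+1)`, so the
image `N` of `ker (f 0)` there is a normal subgroup. A normal subgroup of a finite product of
simple groups with trivial centres that projects nontrivially to every factor is everything: the
commutator of an element of it with an element of a factor is a nontrivial element of that factor.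
If `N` is everything, `G` maps onto `H 0 × ∏ H (i+1)`. Otherwise `N` projects trivially to some
factor `j`, i.e. `ker (f 0) ≤ ker (f j)`, so `f j` factors through `f 0` by a surjection out of the
simple group `H 0`, necessarily an isomorphism: `f 0` and `f j` would be equivalent.
-/

open Function Subgroup
open scoped commutatorElement

lemma IsSimpleGroup.center_eq_bot {H : Type*} [Group H] [IsSimpleGroup H]
    (hnonab : ∃ a b : H, a * b ≠ b * a) : center H = ⊥ :=
  (center H).normal_of_characteristic.eq_bot_or_eq_top.resolve_right fun htop => by
    obtain ⟨a, b, hab⟩ := hnonab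
    exact hab (mem_center_iff.mp (htop ▸ mem_top b) a)

lemma MonoidHom.injective_of_isSimpleGroup {A B : Type*} [Group A] [Group B] [IsSimpleGroup A]
    [Nontrivial B] (β : A →* B) (hβ : Surjective β) : Injective β := by
  rw [← ker_eq_bot_iff]
  refine β.normal_ker.eq_bot_or_eq_top.resolve_right fun htop => ?_
  obtain ⟨y, hy⟩ := exists_ne (1 : B)
  obtain ⟨z, rfl⟩ := hβ y
  exact hy (mem_ker.mp (htop ▸ mem_top z))

lemma MonoidHom.exists_mulEquiv_apply_eq_of_ker_le {G A B : Type*} [Group G] [Group A] [Group B]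
    [IsSimpleGroup A] [Nontrivial B] {f : G →* A} {g : G →* B} (hf : Surjective f)
    (hg : Surjective g) (hker : f.ker ≤ g.ker) : ∃ α : A ≃* B, ∀ x, α (f x) = g x := by
  set β := f.liftOfSurjective hf ⟨g, hker⟩
  have hβ : ∀ x, β (f x) = g x := f.liftOfRightInverse_comp_apply _ _ _
  have hβsurj : Surjective β := fun y =>
    let ⟨x, hx⟩ := hg y
    ⟨f x, (hβ x).trans hx⟩
  exact ⟨.ofBijective β ⟨β.injective_of_isSimpleGroup hβsurj, hβsurj⟩, hβ⟩

lemma MonoidHom.surjective_prod_of_map_ker_eq_top {G A B : Type*} [Group G] [Group A] [Group B]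
    (φ : G →* A) {ψ : G →* B} (hψ : Surjective ψ) (h : ψ.ker.map φ = ⊤) :
    Surjective (φ.prod ψ) := by
  rintro ⟨a, b⟩
  obtain ⟨g₁, rfl⟩ := hψ b
  obtain ⟨g₂, hg₂, hφ⟩ : a * (φ g₁)⁻¹ ∈ ψ.ker.map φ := h ▸ mem_top _
  exact ⟨g₂ * g₁, by simp [hφ, mem_ker.mp hg₂]⟩

section Pi

variable {ι : Type*} {H : ι → Type*} [∀ i, Group (H i)] [DecidableEq ι]

lemma Pi.mulSingle_commutatorElement (j : ι) (a : H j) (n : ∀ i, H i) :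
    ⁅Pi.mulSingle j a, n⁆ = Pi.mulSingle j ⁅a, n j⁆ := by
  funext i
  rcases eq_or_ne i j with rfl | hij
  · simp [commutatorElement_def]
  · simp [commutatorElement_def, hij]

lemma Subgroup.mulSingle_mem_of_normal [∀ i, IsSimpleGroup (H i)]
    (hcenter : ∀ i, center (H i) = ⊥) {N : Subgroup (∀ i, H i)} (hN : N.Normal)
    {n : ∀ i, H i} (hn : n ∈ N) {j : ι} (hnj : n j ≠ 1) (x : H j) : Pi.mulSingle j x ∈ N := by
  obtain ⟨a, ha⟩ : ∃ a, ⁅a, n j⁆ ≠ 1 := by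
    have : n j ∉ center (H j) := by rwa [hcenter, mem_bot]
    obtain ⟨a, ha⟩ := not_forall.mp (mt mem_center_iff.mpr this)
    exact ⟨a, mt commutatorElement_eq_one_iff_mul_comm.mp ha⟩
  have hmem : ⁅a, n j⁆ ∈ N.comap (MonoidHom.mulSingle H j) := by
    rw [mem_comap, MonoidHom.mulSingle_apply, ← Pi.mulSingle_commutatorElement,
      commutatorElement_def]
    exact N.mul_mem (hN.conj_mem n hn _) (N.inv_mem hn)
  have htop : N.comap (MonoidHom.mulSingle H j) = ⊤ :=
    (hN.comap _).eq_bot_or_eq_top.resolve_left fun hbot => ha (mem_bot.mp (hbot ▸ hmem))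
  exact mem_comap.mp (htop ▸ mem_top x)

lemma Subgroup.eq_top_of_normal_of_forall_exists_apply_ne_one [Finite ι]
    [∀ i, IsSimpleGroup (H i)] (hcenter : ∀ i, center (H i) = ⊥) {N : Subgroup (∀ i, H i)}
    (hN : N.Normal) (h : ∀ j, ∃ n ∈ N, n j ≠ 1) : N = ⊤ :=
  eq_top_iff.mpr fun x _ => pi_mem_of_mulSingle_mem x fun j =>
    let ⟨_, hn, hnj⟩ := h j
    mulSingle_mem_of_normal hcenter hN hn hnj (x j)

end Pi

lemma MonoidHom.surjective_pi_of_isSimpleGroup {G : Type*} [Group G] (k : ℕ)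
    (H : Fin k → Type*) [∀ i, Group (H i)] [∀ i, IsSimpleGroup (H i)]
    (hcenter : ∀ i, center (H i) = ⊥) (f : ∀ i, G →* H i) (hsurj : ∀ i, Surjective (f i))
    (hneq : ∀ i j, i ≠ j → ¬ ∃ α : H i ≃* H j, ∀ g : G, α (f i g) = f j g) :
    Surjective (MonoidHom.pi f) := by
  induction k with
  | zero => exact fun x => ⟨1, Subsingleton.elim _ _⟩
  | succ k ih =>
    set φ := MonoidHom.pi fun i : Fin k => f i.succ
    have hφ : Surjective φ := ih _ (fun _ => hcenter _) _ (fun _ => hsurj _)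
      fun i j hij => hneq _ _ ((Fin.succ_injective _).ne hij)
    have hN : (f 0).ker.map φ = ⊤ := by
      refine eq_top_of_normal_of_forall_exists_apply_ne_one (fun _ => hcenter _)
        ((f 0).normal_ker.map φ hφ) ?_
      by_contra! htrivial
      obtain ⟨j, hj⟩ := htrivial
      have hker : (f 0).ker ≤ (f j.succ).ker := fun g hg => hj (φ g) ⟨g, hg, rfl⟩
      exact hneq 0 j.succ (Fin.succ_ne_zero j).symm
        (MonoidHom.exists_mulEquiv_apply_eq_of_ker_le (hsurj 0) (hsurj _) hker)
    intro x
    obtain ⟨g, hg⟩ := φ.surjective_prod_of_map_ker_eq_top (hsurj 0) hN (fun i => x i.succ, x 0)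
    refine ⟨g, funext fun i => Fin.cases ?_ (fun i => ?_) i⟩
    · exact congrArg Prod.snd hg
    · exact congrFun (congrArg Prod.fst hg) i

theorem hall_lemma_finite_general {G : Type*} [Group G] (k : ℕ) (H : Fin k → Type*)
    [∀ i, Group (H i)]
    (hsimple : ∀ i, IsSimpleGroup (H i))
    (hnonab : ∀ i, ∃ a b : H i, a * b ≠ b * a)
    (f : ∀ i, G →* H i) (hsurj : ∀ i, Function.Surjective (f i))
    (hneq : ∀ i j, i ≠ j → ¬ ∃ α : H i ≃* H j, ∀ g : G, α (f i g) = f j g) :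
    Function.Surjective (fun g : G => (fun i => f i g : ∀ i, H i)) :=
  MonoidHom.surjective_pi_of_isSimpleGroup k H
    (fun i => IsSimpleGroup.center_eq_bot (hnonab i)) f hsurj hneq

/-- Dunfield–Thurston / Hall lemma: if `G` surjects onto pairwise non-equivalent finite
non-abelian simple groups `H 1, ..., H k`, then the product map is surjective. -/
theorem hall_lemma_finite {G : Type*} [Group G] (k : ℕ) (H : Fin k → Type*)
    [∀ i, Group (H i)] [∀ i, Finite (H i)]
    (hsimple : ∀ i, IsSimpleGroup (H i))
    (hnonab : ∀ i, ∃ a b : H i, a * b ≠ b * a)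
    (f : ∀ i, G →* H i) (hsurj : ∀ i, Function.Surjective (f i))
    (hneq : ∀ i j, i ≠ j → ¬ ∃ α : H i ≃* H j, ∀ g : G, α (f i g) = f j g) :
    Function.Surjective (fun g : G => (fun i => f i g : ∀ i, H i)) :=
  hall_lemma_finite_general k H hsimple hnonab f hsurj hneq
end
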